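/- arXiv:2403.05364 — 2 statements merged into one kernel-verified Lean document; each statement's English description precedes it below -/
import Mathlib

section
/- Fix an integer d ≥ 3 and a real number C ≥ 1. Let 𝒮 be a family of pairwise non-isomorphic finite (d+1)-uniform hypergraphs, each having at least one edge, such that: (i) for every m ≥ 1, the number of members of 𝒮 with exactly m edges is at most C^m; and (ii) every balanced member of 𝒮 with exactly m edges has at most (m + 2^{d+1} − 4)(d+1)/(2^{d+1} − 2) vertices. Then there exists a constant c > 0 (depending only on d and C) such that for all sufficiently large n there is a (d+1)-uniform hypergraph on n vertices with at least c · n^{d + 1 − (d+1)/(2^{d+1} − 2)} edges that contains no copy of any member of 𝒮. -/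
/-- A finite hypergraph with vertices labeled by natural numbers. -/
structure HG where
  verts : Finset ℕ
  edges : Finset (Finset ℕ)

/-- `M` is a `(d+1)`-uniform hypergraph: every edge is a `(d+1)`-element subset
of the vertex set. -/
def HG.Uniform (d : ℕ) (M : HG) : Prop :=
  ∀ e ∈ M.edges, e ⊆ M.verts ∧ e.card = d + 1

/-- `M` is balanced: there is a coloring of the vertices with `d + 1` colors that is
injective on every edge. -/
def HG.Balanced (d : ℕ) (M : HG) : Prop :=
  ∃ c : ℕ → Fin (d + 1), ∀ e ∈ M.edges, Set.InjOn c ↑e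

/-- Two hypergraphs are isomorphic: a bijection between vertex sets carrying edges
to edges in both directions. -/
def Isomorphic (M N : HG) : Prop :=
  ∃ f : ℕ → ℕ, Set.InjOn f ↑M.verts ∧ M.verts.image f = N.verts ∧
    ∀ e ⊆ M.verts, (e ∈ M.edges ↔ e.image f ∈ N.edges)

/-- `H` (a hypergraph on vertex type `V`) contains a copy of `M`: an injective map from
the vertices of `M` into `V` sending every edge of `M` to an edge of `H`. -/
def ContainsCopy {V : Type*} [DecidableEq V] (H : Finset (Finset V)) (M : HG) : Prop :=
  ∃ f : ℕ → V, Set.InjOn f ↑M.verts ∧ ∀ e ∈ M.edges, e.image f ∈ H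

/-!
Random deletion inside a complete `(d+1)`-partite host. Colour `Fin n` by residues mod `d + 1`
and let `K` be the set of rainbow `(d+1)`-sets, so `|K| ≥ (n / (2(d+1)))^(d+1)` and every member
of `𝒮` that embeds into `K` is balanced. Keep each edge of `K` with probability
`p = δ n^(-ε)`, where `ε = (d+1)/(2^(d+1)-2)` and `δ = 1/(2C)`. A balanced member with `m` edges
has at most `n^(ε (m + 2^(d+1) - 4))` embeddings, each surviving with probability `p^m`; since
`ε (2^(d+1) - 4) = d + 1 - 2ε` and there are at most `C^m` members with `m` edges, the expected
number of surviving copies is at most `n^(d+1-2ε) ∑ₘ 2^(-m) ≤ n^(d+1-2ε)`, while the expected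
number of surviving edges is of order `δ n^(d+1-ε)`. Deleting one edge from each surviving copy
leaves a copy-free hypergraph with `≳ n^(d+1-ε)` edges.
-/

open Finset

section RandomSubset

variable {α : Type*} [DecidableEq α]

/-- The probability that the `p`-random subset of `K` (each element kept independently with
probability `p`) equals `H`; expectations are written as weighted sums over `K.powerset`. -/
def binomialWeight (p : ℝ) (K H : Finset α) : ℝ := p ^ #H * (1 - p) ^ #(K \ H)

lemma sum_binomialWeight_filter_superset {K S : Finset α} (hS : S ⊆ K) (p : ℝ) :
    ∑ H ∈ K.powerset with S ⊆ H, binomialWeight p K H = p ^ #S := by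
  have h := prod_add (fun _ => p) (fun e => if e ∉ S then 1 - p else 0) K
  have hlhs : ∀ e ∈ K, p + (if e ∉ S then 1 - p else 0) = if e ∈ S then p else 1 := by
    intro e _; split_ifs <;> ring
  rw [prod_congr rfl hlhs, prod_ite_mem, inter_eq_right.2 hS, prod_const] at h
  rw [h, sum_filter]
  refine sum_congr rfl fun H _ => ?_
  have hSH : (∀ e ∈ K \ H, e ∉ S) ↔ S ⊆ H := by
    refine ⟨fun h' e he => ?_, fun h' e he heS => (mem_sdiff.1 he).2 (h' heS)⟩
    by_contra heH
    exact h' e (mem_sdiff.2 ⟨hS he, heH⟩) he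
  simp only [prod_const, prod_ite_zero, hSH, binomialWeight, mul_ite, mul_zero]

lemma sum_binomialWeight_mul_card_filter_subset {K : Finset α} {ι : Type*} (s : Finset ι)
    (P : ι → Finset α) (hP : ∀ i ∈ s, P i ⊆ K) (p : ℝ) :
    ∑ H ∈ K.powerset, binomialWeight p K H * #{i ∈ s | P i ⊆ H} = ∑ i ∈ s, p ^ #(P i) := by
  simp_rw [natCast_card_filter, mul_sum, mul_ite, mul_one, mul_zero]
  rw [sum_comm]
  refine sum_congr rfl fun i hi => ?_
  rw [← sum_filter, sum_binomialWeight_filter_superset (hP i hi)]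

lemma sum_binomialWeight (K : Finset α) (p : ℝ) : ∑ H ∈ K.powerset, binomialWeight p K H = 1 := by
  simpa using sum_binomialWeight_filter_superset (empty_subset K) p

lemma sum_binomialWeight_mul_card (K : Finset α) (p : ℝ) :
    ∑ H ∈ K.powerset, binomialWeight p K H * #H = p * #K := by
  have h := sum_binomialWeight_mul_card_filter_subset K singleton
    (fun e he => singleton_subset_iff.2 he) p
  simp only [singleton_subset_iff, card_singleton, pow_one, sum_const, nsmul_eq_mul] at h
  rw [mul_comm, ← h]
  refine sum_congr rfl fun H hH => ?_
  rw [filter_mem_eq_inter, inter_eq_right.2 (mem_powerset.1 hH)]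

lemma binomialWeight_nonneg {p : ℝ} (hp0 : 0 ≤ p) (hp1 : p ≤ 1) (K H : Finset α) :
    0 ≤ binomialWeight p K H :=
  mul_nonneg (pow_nonneg hp0 _) (pow_nonneg (sub_nonneg.2 hp1) _)

lemma exists_sum_mul_le_of_sum_eq_one {ι : Type*} {s : Finset ι} {w f : ι → ℝ}
    (hw0 : ∀ i ∈ s, 0 ≤ w i) (hw1 : ∑ i ∈ s, w i = 1) :
    ∃ i ∈ s, ∑ j ∈ s, w j * f j ≤ f i := by
  by_contra! hlt
  obtain ⟨i, hi, hwi⟩ := exists_lt_of_sum_lt (s := s) (f := fun _ => 0) (g := w) (by simp [hw1])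
  have := sum_lt_sum (fun j hj => mul_le_mul_of_nonneg_left (hlt j hj).le (hw0 j hj))
    ⟨i, hi, mul_lt_mul_of_pos_left (hlt i hi) hwi⟩
  rw [← sum_mul, hw1, one_mul] at this
  exact lt_irrefl _ this

lemma exists_subset_forall_not_subset {ι : Type*} (H₀ : Finset α) (s : Finset ι)
    (P : ι → Finset α) (hP : ∀ i ∈ s, (P i).Nonempty) :
    ∃ H ⊆ H₀, (∀ i ∈ s, ¬ P i ⊆ H) ∧ #H₀ ≤ #H + #{i ∈ s | P i ⊆ H₀} := by
  set T := {i ∈ s | P i ⊆ H₀}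
  choose pick hpick using fun i (hi : i ∈ T) => hP i (mem_filter.1 hi).1
  set D := T.attach.image fun i => pick i.1 i.2
  refine ⟨H₀ \ D, sdiff_subset, fun i hi hsub => ?_, ?_⟩
  · have hiT : i ∈ T := mem_filter.2 ⟨hi, hsub.trans sdiff_subset⟩
    exact (mem_sdiff.1 (hsub (hpick i hiT))).2 (mem_image_of_mem _ (mem_attach T ⟨i, hiT⟩))
  · calc #H₀ ≤ #(H₀ \ D) + #D := card_le_card_sdiff_add_card
      _ ≤ #(H₀ \ D) + #T := Nat.add_le_add_left (card_image_le.trans_eq (card_attach)) _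

theorem exists_subset_forall_not_subset_le_card {ι : Type*} (K : Finset α) (s : Finset ι)
    (P : ι → Finset α) (hPK : ∀ i ∈ s, P i ⊆ K) (hP : ∀ i ∈ s, (P i).Nonempty)
    {p : ℝ} (hp0 : 0 ≤ p) (hp1 : p ≤ 1) :
    ∃ H ⊆ K, (∀ i ∈ s, ¬ P i ⊆ H) ∧ p * #K - ∑ i ∈ s, p ^ #(P i) ≤ #H := by
  obtain ⟨H₀, hH₀K, hH₀⟩ := exists_sum_mul_le_of_sum_eq_one
    (f := fun H => (#H : ℝ) - #{i ∈ s | P i ⊆ H})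
    (fun H _ => binomialWeight_nonneg hp0 hp1 K H) (sum_binomialWeight K p)
  simp only [mul_sub, sum_sub_distrib, sum_binomialWeight_mul_card,
    sum_binomialWeight_mul_card_filter_subset s P hPK] at hH₀
  obtain ⟨H, hH, hfree, hcard⟩ := exists_subset_forall_not_subset H₀ s P hP
  refine ⟨H, hH.trans (mem_powerset.1 hH₀K), hfree, ?_⟩
  have : (#H₀ : ℝ) ≤ #H + #{i ∈ s | P i ⊆ H₀} := by exact_mod_cast hcard
  linarith

end RandomSubset

lemma sum_pow_le_one_of_card_fiber_le {ι : Type*} (s : Finset ι) (m : ι → ℕ)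
    (hm : ∀ i ∈ s, 1 ≤ m i) {C δ : ℝ} (hC : 0 ≤ C) (hδ : 0 ≤ δ) (hCδ : C * δ ≤ 1 / 2)
    (hfiber : ∀ k, 1 ≤ k → (#{i ∈ s | m i = k} : ℝ) ≤ C ^ k) :
    ∑ i ∈ s, δ ^ m i ≤ 1 := by
  set t := s.image m
  have ht : t ⊆ Ico 1 (t.sup id + 1) := fun k hk => by
    obtain ⟨i, hi, rfl⟩ := mem_image.1 hk
    exact mem_Ico.2 ⟨hm i hi, Nat.lt_succ_of_le (le_sup (f := id) hk)⟩
  calc ∑ i ∈ s, δ ^ m i = ∑ k ∈ t, #{i ∈ s | m i = k} • δ ^ k := sum_comp _ _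
    _ ≤ ∑ k ∈ t, (1 / 2 : ℝ) ^ k := sum_le_sum fun k hk => by
        obtain ⟨i, hi, rfl⟩ := mem_image.1 hk
        rw [nsmul_eq_mul]
        calc _ ≤ C ^ m i * δ ^ m i := by gcongr; exact hfiber _ (hm i hi)
          _ = (C * δ) ^ m i := (mul_pow _ _ _).symm
          _ ≤ _ := by gcongr
    _ ≤ ∑ k ∈ Ico 1 (t.sup id + 1), (1 / 2 : ℝ) ^ k :=
        sum_le_sum_of_subset_of_nonneg ht fun _ _ _ => by positivity
    _ ≤ (1 / 2) ^ 1 / (1 - 1 / 2) := geom_sum_Ico_le_of_lt_one (by norm_num) (by norm_num)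
    _ = 1 := by norm_num

section Rainbow

variable {α β : Type*} [Fintype α] [Fintype β] [DecidableEq β]

def rainbowSets (κ : α → β) : Finset (Finset α) := {e | #e = Fintype.card β ∧ Set.InjOn κ e}

lemma card_of_mem_rainbowSets {κ : α → β} {e : Finset α} (he : e ∈ rainbowSets κ) :
    #e = Fintype.card β :=
  (mem_filter.1 he).2.1

lemma injOn_of_mem_rainbowSets {κ : α → β} {e : Finset α} (he : e ∈ rainbowSets κ) :
    Set.InjOn κ e :=
  (mem_filter.1 he).2.2

lemma prod_card_fiber_le_card_rainbowSets [DecidableEq α] (κ : α → β) :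
    ∏ b, #{a | κ a = b} ≤ #(rainbowSets κ) := by
  set T := Fintype.piFinset fun b => ({a | κ a = b} : Finset α)
  have hκ : ∀ g ∈ T, ∀ b, κ (g b) = b := fun g hg b => by simpa using Fintype.mem_piFinset.1 hg b
  rw [← Fintype.card_piFinset]
  refine card_le_card_of_injOn (fun g => univ.image g) (fun g hg => ?_) fun g₁ hg₁ g₂ hg₂ h => ?_
  · have hinj : Function.Injective g := Function.LeftInverse.injective (hκ g hg)
    refine mem_filter.2 ⟨mem_univ _, by rw [card_image_of_injective _ hinj, card_univ], ?_⟩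
    intro x hx y hy hxy
    obtain ⟨b, -, rfl⟩ := mem_image.1 hx
    obtain ⟨b', -, rfl⟩ := mem_image.1 hy
    rw [hκ g hg, hκ g hg] at hxy
    rw [hxy]
  · funext b
    have hb : g₁ b ∈ univ.image g₂ := by
      rw [← show univ.image g₁ = univ.image g₂ from h]; exact mem_image_of_mem g₁ (mem_univ b)
    obtain ⟨b', -, hb'⟩ := mem_image.1 hb
    have : b' = b := by rw [← hκ g₂ hg₂ b', hb', hκ g₁ hg₁ b]
    rw [← hb', this]

end Rainbow

lemma div_le_card_filter_ofNat_eq (n d : ℕ) (i : Fin (d + 1)) :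
    n / (d + 1) ≤ #{x : Fin n | Fin.ofNat (d + 1) x = i} := by
  have hfiber : #{x : Fin n | Fin.ofNat (d + 1) x = i} = Nat.count (· ≡ i [MOD d + 1]) n := by
    rw [Nat.count_eq_card_filter_range, ← card_map Fin.valEmbedding]
    congr 1
    ext x
    simp only [mem_map, mem_filter, mem_univ, true_and, mem_range, Fin.valEmbedding_apply,
      Fin.ext_iff, Fin.val_ofNat, Nat.ModEq, Nat.mod_eq_of_lt i.2]
    exact ⟨fun ⟨y, hy, hyx⟩ => hyx ▸ ⟨y.2, hy⟩, fun ⟨hx, hxi⟩ => ⟨⟨x, hx⟩, hxi, rfl⟩⟩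
  rw [hfiber, Nat.count_modEq_card n d.succ_pos]
  exact Nat.le_add_right _ _

lemma div_two_mul_le_natCast_div {n r : ℕ} (hr : 0 < r) (hrn : r ≤ n) :
    (n : ℝ) / (2 * r) ≤ (n / r : ℕ) := by
  have hq : 1 ≤ n / r := (Nat.one_le_div_iff hr).2 hrn
  have hlt : n < (n / r + 1) * r := by rw [add_mul, one_mul]; exact Nat.lt_div_mul_add hr
  rw [div_le_iff₀ (by positivity)]
  have : (n : ℝ) < ((n / r : ℕ) + 1) * r := by exact_mod_cast hlt
  have : (1 : ℝ) ≤ (n / r : ℕ) := by exact_mod_cast hq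
  nlinarith

lemma pow_div_le_card_rainbowSets_ofNat (n d : ℕ) :
    (n / (d + 1)) ^ (d + 1) ≤ #(rainbowSets fun x : Fin n => Fin.ofNat (d + 1) x) :=
  calc (n / (d + 1)) ^ (d + 1) = ∏ _i : Fin (d + 1), n / (d + 1) := by simp
    _ ≤ ∏ i, #{x : Fin n | Fin.ofNat (d + 1) x = i} :=
      prod_le_prod' fun i _ => div_le_card_filter_ofNat_eq n d i
    _ ≤ _ := prod_card_fiber_le_card_rainbowSets _

namespace HG

variable {V : Type*} [DecidableEq V]

def copyEdges (M : HG) (g : M.verts ↪ V) : Finset (Finset V) :=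
  M.edges.image fun e => (e.subtype (· ∈ M.verts)).map g

lemma card_copyEdges {M : HG} (hM : ∀ e ∈ M.edges, e ⊆ M.verts) (g : M.verts ↪ V) :
    #(M.copyEdges g) = #M.edges := by
  refine card_image_of_injOn fun e₁ he₁ e₂ he₂ h => ?_
  have h' := congrArg (map (Function.Embedding.subtype (· ∈ M.verts))) (map_injective g h)
  rwa [subtype_map_of_mem (hM e₁ he₁), subtype_map_of_mem (hM e₂ he₂)] at h'

lemma exists_copyEdges_subset_of_containsCopy {M : HG} {H : Finset (Finset V)}
    (hM : ∀ e ∈ M.edges, e ⊆ M.verts) (h : ContainsCopy H M) :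
    ∃ g : M.verts ↪ V, M.copyEdges g ⊆ H := by
  obtain ⟨f, hf, hfH⟩ := h
  refine ⟨⟨fun x => f x, fun x y hxy => Subtype.ext (hf x.2 y.2 hxy)⟩, ?_⟩
  intro E hE
  obtain ⟨e, he, rfl⟩ := mem_image.1 hE
  convert hfH e he using 1
  ext y
  simp only [mem_map, mem_subtype, mem_image, Subtype.exists]
  exact ⟨fun ⟨x, _, hx, hxy⟩ => ⟨x, hx, hxy⟩, fun ⟨x, hx, hxy⟩ => ⟨x, hM e he hx, hx, hxy⟩⟩

lemma card_edges_le_of_containsCopy {M : HG} {K : Finset (Finset V)}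
    (hM : ∀ e ∈ M.edges, e ⊆ M.verts) (h : ContainsCopy K M) : #M.edges ≤ #K := by
  obtain ⟨g, hg⟩ := exists_copyEdges_subset_of_containsCopy hM h
  exact card_copyEdges hM g ▸ card_le_card hg

lemma balanced_of_containsCopy {d : ℕ} {M : HG} {H : Finset (Finset V)} (κ : V → Fin (d + 1))
    (hM : ∀ e ∈ M.edges, e ⊆ M.verts) (hH : ∀ e ∈ H, Set.InjOn κ e) (h : ContainsCopy H M) :
    M.Balanced d := by
  obtain ⟨f, hf, hfH⟩ := h
  refine ⟨κ ∘ f, fun e he => ?_⟩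
  have hmaps : Set.MapsTo f e (e.image f) := fun x hx => mem_coe.2 (mem_image_of_mem f hx)
  exact (hH _ (hfH e he)).comp (hf.mono (hM e he)) hmaps

variable [Fintype V]

noncomputable def copiesIn (M : HG) (K : Finset (Finset V)) : Finset (M.verts ↪ V) :=
  {g | M.copyEdges g ⊆ K}

lemma card_copiesIn_le (M : HG) (K : Finset (Finset V)) :
    #(M.copiesIn K) ≤ Fintype.card V ^ #M.verts :=
  calc #(M.copiesIn K) ≤ Fintype.card (M.verts ↪ V) := card_le_univ _
    _ ≤ Fintype.card V ^ #M.verts := by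
      rw [Fintype.card_embedding_eq, Fintype.card_coe]; exact Nat.descFactorial_le_pow _ _

end HG

lemma pow_mul_mul_rpow_neg_pow_le {x δ ε b : ℝ} {v m : ℕ} (hx : 1 ≤ x) (hδ : 0 ≤ δ)
    (hv : (v : ℝ) ≤ (m + b) * ε) :
    x ^ v * (δ * x ^ (-ε)) ^ m ≤ δ ^ m * x ^ (b * ε) := by
  have hx0 : 0 ≤ x := zero_le_one.trans hx
  calc x ^ v * (δ * x ^ (-ε)) ^ m = δ ^ m * (x ^ (v : ℝ) * x ^ (-ε * m)) := by
        rw [mul_pow, ← Real.rpow_natCast (x ^ (-ε)), ← Real.rpow_mul hx0, Real.rpow_natCast]; ring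
    _ ≤ δ ^ m * (x ^ ((m + b) * ε) * x ^ (-ε * m)) := by
        gcongr
    _ = δ ^ m * x ^ (b * ε) := by
        rw [← Real.rpow_add (zero_lt_one.trans_le hx)]; ring_nf

lemma sum_card_copiesIn_mul_pow_le {V : Type*} [Fintype V] [DecidableEq V] [Nonempty V]
    (F : Finset HG) (K : Finset (Finset V)) {C δ ε b : ℝ} (hC : 0 ≤ C) (hδ : 0 ≤ δ)
    (hCδ : C * δ ≤ 1 / 2) (hm : ∀ M ∈ F, 1 ≤ #M.edges)
    (hfiber : ∀ k, 1 ≤ k → (#{M ∈ F | #M.edges = k} : ℝ) ≤ C ^ k)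
    (hv : ∀ M ∈ F, (#M.verts : ℝ) ≤ (#M.edges + b) * ε) :
    ∑ M ∈ F, #(M.copiesIn K) * (δ * (Fintype.card V : ℝ) ^ (-ε)) ^ #M.edges
      ≤ (Fintype.card V : ℝ) ^ (b * ε) := by
  set x : ℝ := (Fintype.card V : ℝ)
  have hx : 1 ≤ x := Nat.one_le_cast.2 Fintype.card_pos
  calc ∑ M ∈ F, #(M.copiesIn K) * (δ * x ^ (-ε)) ^ #M.edges
      ≤ ∑ M ∈ F, x ^ #M.verts * (δ * x ^ (-ε)) ^ #M.edges := by
        gcongr with M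
        simpa [x] using (Nat.cast_le (α := ℝ)).2 (M.card_copiesIn_le K)
    _ ≤ ∑ M ∈ F, δ ^ #M.edges * x ^ (b * ε) :=
        sum_le_sum fun M hM => pow_mul_mul_rpow_neg_pow_le hx hδ (hv M hM)
    _ = (∑ M ∈ F, δ ^ #M.edges) * x ^ (b * ε) := (sum_mul _ _ _).symm
    _ ≤ x ^ (b * ε) := mul_le_of_le_one_left (by positivity)
        (sum_pow_le_one_of_card_fiber_le F _ hm hC hδ hCδ hfiber)

lemma finite_setOf_containsCopy {V : Type*} [DecidableEq V] (K : Finset (Finset V))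
    {𝒮 : Set HG} (hU : ∀ M ∈ 𝒮, ∀ e ∈ M.edges, e ⊆ M.verts)
    (hNE : ∀ M ∈ 𝒮, M.edges.Nonempty)
    (hfin : ∀ m, 1 ≤ m → {M ∈ 𝒮 | #M.edges = m}.Finite) :
    {M ∈ 𝒮 | ContainsCopy K M}.Finite :=
  ((Set.finite_Icc 1 #K).biUnion fun m hm => hfin m hm.1).subset fun M ⟨hM, hcopy⟩ =>
    Set.mem_biUnion ⟨card_pos.2 (hNE M hM), HG.card_edges_le_of_containsCopy (hU M hM) hcopy⟩
      ⟨hM, rfl⟩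

theorem exists_subset_forall_not_containsCopy {V : Type*} [Fintype V] [DecidableEq V]
    [Nonempty V] {d : ℕ} (κ : V → Fin (d + 1)) {K : Finset (Finset V)}
    (hK : ∀ e ∈ K, Set.InjOn κ e) {𝒮 : Set HG} (hU : ∀ M ∈ 𝒮, ∀ e ∈ M.edges, e ⊆ M.verts)
    (hNE : ∀ M ∈ 𝒮, M.edges.Nonempty) {C δ ε b : ℝ} (hC : 0 ≤ C) (hδ0 : 0 ≤ δ) (hδ1 : δ ≤ 1)
    (hCδ : C * δ ≤ 1 / 2) (hε : 0 ≤ ε)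
    (hCount : ∀ m, 1 ≤ m → {M ∈ 𝒮 | #M.edges = m}.Finite ∧
      ({M ∈ 𝒮 | #M.edges = m}.ncard : ℝ) ≤ C ^ m)
    (hBal : ∀ M ∈ 𝒮, M.Balanced d → (#M.verts : ℝ) ≤ (#M.edges + b) * ε) :
    ∃ H ⊆ K, δ * (Fintype.card V : ℝ) ^ (-ε) * #K - (Fintype.card V : ℝ) ^ (b * ε) ≤ #H ∧
      ∀ M ∈ 𝒮, ¬ ContainsCopy H M := by
  set p := δ * (Fintype.card V : ℝ) ^ (-ε)
  have hx : (1 : ℝ) ≤ Fintype.card V := Nat.one_le_cast.2 Fintype.card_pos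
  have hp0 : 0 ≤ p := by positivity
  have hp1 : p ≤ 1 :=
    mul_le_one₀ hδ1 (by positivity) (Real.rpow_le_one_of_one_le_of_nonpos hx (by linarith))
  have hfin := finite_setOf_containsCopy K hU hNE fun m hm => (hCount m hm).1
  set F := hfin.toFinset
  have hF : ∀ {M}, M ∈ F ↔ M ∈ 𝒮 ∧ ContainsCopy K M := by simp [F]
  obtain ⟨H, hHK, hfree, hcard⟩ := exists_subset_forall_not_subset_le_card K
    (F.sigma fun M => M.copiesIn K) (fun x => x.1.copyEdges x.2)
    (fun x hx => (mem_filter.1 (mem_sigma.1 hx).2).2)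
    (fun x hx => (hNE x.1 (hF.1 (mem_sigma.1 hx).1).1).image _) hp0 hp1
  have hsum : ∑ x ∈ F.sigma fun M => M.copiesIn K, p ^ #(x.1.copyEdges x.2)
      = ∑ M ∈ F, #(M.copiesIn K) * p ^ #M.edges := by
    rw [sum_sigma]
    refine sum_congr rfl fun M hM => ?_
    rw [sum_congr rfl fun g _ => by rw [HG.card_copyEdges (hU M (hF.1 hM).1)], sum_const,
      nsmul_eq_mul]
  have hfiber : ∀ k, 1 ≤ k → (#{M ∈ F | #M.edges = k} : ℝ) ≤ C ^ k := fun k hk =>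
    calc (#{M ∈ F | #M.edges = k} : ℝ) ≤ ({M ∈ 𝒮 | #M.edges = k}.ncard : ℝ) := by
          rw [← Set.ncard_coe_finset]
          refine Nat.cast_le.2 (Set.ncard_le_ncard (fun M hM => ?_) (hCount k hk).1)
          simp only [coe_filter, Set.mem_ofPred_eq] at hM
          exact ⟨(hF.1 hM.1).1, hM.2⟩
      _ ≤ C ^ k := (hCount k hk).2
  have hcopies := sum_card_copiesIn_mul_pow_le F K hC hδ0 hCδ
    (fun M hM => card_pos.2 (hNE M (hF.1 hM).1)) hfiber fun M hM =>
      hBal M (hF.1 hM).1 (HG.balanced_of_containsCopy κ (hU M (hF.1 hM).1) hK (hF.1 hM).2)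
  refine ⟨H, hHK, by linarith, fun M hM hcopy => ?_⟩
  obtain ⟨g, hg⟩ := HG.exists_copyEdges_subset_of_containsCopy (hU M hM) hcopy
  obtain ⟨f, hf, hfH⟩ := hcopy
  have hMF : M ∈ F := hF.2 ⟨hM, f, hf, fun e he => hHK (hfH e he)⟩
  exact hfree ⟨M, g⟩ (mem_sigma.2 ⟨hMF, mem_filter.2 ⟨mem_univ _, hg.trans hHK⟩⟩) hg

lemma mul_rpow_sub_le_mul_rpow_neg_mul_sub_rpow {x a c δ ε K : ℝ} {k : ℕ} (hx : 0 < x)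
    (ha : 0 < a) (hδ : 0 ≤ δ) (hc : c = δ / (2 * a ^ k)) (hxε : x ^ (-ε) ≤ c)
    (hK : (x / a) ^ k ≤ K) :
    c * x ^ ((k : ℝ) - ε) ≤ δ * x ^ (-ε) * K - x ^ ((k : ℝ) - 2 * ε) := by
  have hsplit : ∀ y : ℝ, x ^ ((k : ℝ) - y - ε) = x ^ ((k : ℝ) - y) * x ^ (-ε) := fun y => by
    rw [← Real.rpow_add hx]; ring_nf
  calc c * x ^ ((k : ℝ) - ε) = δ * x ^ (-ε) * (x / a) ^ k - c * x ^ ((k : ℝ) - ε) := by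
        have := hsplit 0
        rw [sub_zero, Real.rpow_natCast] at this
        rw [hc, div_pow, this]; field_simp; ring
    _ ≤ δ * x ^ (-ε) * K - x ^ ((k : ℝ) - 2 * ε) := by
        have := hsplit ε
        rw [sub_sub, ← two_mul] at this
        rw [this, mul_comm c]
        gcongr

theorem exists_copy_free_le_card {d n : ℕ} (hdn : d + 1 ≤ n) {𝒮 : Set HG}
    (hU : ∀ M ∈ 𝒮, M.Uniform d) (hNE : ∀ M ∈ 𝒮, M.edges.Nonempty) {C δ ε b : ℝ} (hC : 0 ≤ C)
    (hδ0 : 0 ≤ δ) (hδ1 : δ ≤ 1) (hCδ : C * δ ≤ 1 / 2) (hε : 0 ≤ ε)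
    (hbε : b * ε = d + 1 - 2 * ε) (hsmall : (n : ℝ) ^ (-ε) ≤ δ / (2 * (2 * (d + 1)) ^ (d + 1)))
    (hCount : ∀ m, 1 ≤ m → {M ∈ 𝒮 | #M.edges = m}.Finite ∧
      ({M ∈ 𝒮 | #M.edges = m}.ncard : ℝ) ≤ C ^ m)
    (hBal : ∀ M ∈ 𝒮, M.Balanced d → (#M.verts : ℝ) ≤ (#M.edges + b) * ε) :
    ∃ H : Finset (Finset (Fin n)), (∀ e ∈ H, #e = d + 1) ∧
      δ / (2 * (2 * (d + 1)) ^ (d + 1)) * (n : ℝ) ^ ((d + 1 : ℝ) - ε) ≤ #H ∧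
      ∀ M ∈ 𝒮, ¬ ContainsCopy H M := by
  have : Nonempty (Fin n) := ⟨⟨0, by omega⟩⟩
  obtain ⟨H, hHK, hcard, hfree⟩ := exists_subset_forall_not_containsCopy
    (fun x : Fin n => Fin.ofNat (d + 1) x) (fun e he => injOn_of_mem_rainbowSets he)
    (fun M hM e he => (hU M hM e he).1) hNE hC hδ0 hδ1 hCδ hε hCount hBal
  refine ⟨H, fun e he => by simpa using card_of_mem_rainbowSets (hHK he), ?_, hfree⟩
  rw [Fintype.card_fin, hbε] at hcard
  have hK : ((n : ℝ) / (2 * (d + 1 : ℕ))) ^ (d + 1)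
      ≤ #(rainbowSets fun x : Fin n => Fin.ofNat (d + 1) x) :=
    calc ((n : ℝ) / (2 * (d + 1 : ℕ))) ^ (d + 1) ≤ ((n / (d + 1) : ℕ) : ℝ) ^ (d + 1) := by
          gcongr; exact div_two_mul_le_natCast_div d.succ_pos hdn
      _ ≤ _ := by exact_mod_cast pow_div_le_card_rainbowSets_ofNat n d
  have := mul_rpow_sub_le_mul_rpow_neg_mul_sub_rpow (x := n) (Nat.cast_pos.2 (by omega))
    (by positivity) hδ0 (by push_cast; rfl) hsmall hK
  push_cast at this
  linarith

/-- Fix `d ≥ 3` and `C ≥ 1`. If `𝒮` is a family of pairwise non-isomorphic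
`(d+1)`-uniform hypergraphs, each with at least one edge, having at most `C^m` members
with `m` edges, and every balanced member with `m` edges has at most
`(m + 2^(d+1) - 4)(d+1)/(2^(d+1) - 2)` vertices, then there is `c > 0` (depending only on
`d` and `C`) such that for all sufficiently large `n` there is a `(d+1)`-uniform hypergraph
on `n` vertices with at least `c · n^(d + 1 - (d+1)/(2^(d+1) - 2))` edges containing no copy
of any member of `𝒮`. -/
theorem turan_lower_bound_for_exponential_size_families
    (d : ℕ) (hd : 3 ≤ d) (C : ℝ) (hC : 1 ≤ C) :
    ∃ c : ℝ, 0 < c ∧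
      ∀ 𝒮 : Set HG,
        (∀ M ∈ 𝒮, M.Uniform d) →
        (∀ M ∈ 𝒮, M.edges.Nonempty) →
        (∀ M ∈ 𝒮, ∀ N ∈ 𝒮, M ≠ N → ¬ Isomorphic M N) →
        (∀ m : ℕ, 1 ≤ m → {M ∈ 𝒮 | M.edges.card = m}.Finite ∧
          ({M ∈ 𝒮 | M.edges.card = m}.ncard : ℝ) ≤ C ^ m) →
        (∀ M ∈ 𝒮, M.Balanced d →
          (M.verts.card : ℝ) ≤
            (((M.edges.card : ℝ) + 2 ^ (d + 1) - 4) * (d + 1)) / (2 ^ (d + 1) - 2)) →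
        ∃ N : ℕ, ∀ n : ℕ, N ≤ n →
          ∃ H : Finset (Finset (Fin n)),
            (∀ e ∈ H, e.card = d + 1) ∧
            c * (n : ℝ) ^ ((d + 1 : ℝ) - (d + 1) / (2 ^ (d + 1) - 2)) ≤ (H.card : ℝ) ∧
            ∀ M ∈ 𝒮, ¬ ContainsCopy H M := by
  set ε : ℝ := (d + 1) / (2 ^ (d + 1) - 2) with hε_def
  have hB : (4 : ℝ) ≤ 2 ^ (d + 1) :=
    calc (4 : ℝ) = 2 ^ 2 := by norm_num
      _ ≤ 2 ^ (d + 1) := pow_le_pow_right₀ one_le_two (by omega)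
  have hε : 0 < ε := div_pos (by positivity) (by linarith)
  have hbε : (2 ^ (d + 1) - 4 : ℝ) * ε = d + 1 - 2 * ε := by
    have : ε * (2 ^ (d + 1) - 2) = d + 1 := div_mul_cancel₀ _ (by linarith)
    linear_combination this
  set δ : ℝ := (2 * C)⁻¹
  have hCδ : C * δ = 1 / 2 := by simp only [δ]; field_simp
  have hc : 0 < δ / (2 * (2 * (d + 1)) ^ (d + 1)) := by positivity
  refine ⟨_, hc, fun 𝒮 hU hNE _ hCount hBal => ?_⟩
  obtain ⟨N, hN⟩ := Filter.eventually_atTop.1 <|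
    (((tendsto_rpow_neg_atTop hε).comp tendsto_natCast_atTop_atTop).eventually
      (eventually_le_nhds hc)).and (Filter.eventually_ge_atTop (d + 1))
  exact ⟨N, fun n hn => exists_copy_free_le_card (hN n hn).2 hU hNE (by linarith) (by positivity)
    (inv_le_one_of_one_le₀ (by linarith)) hCδ.le hε.le hbε (hN n hn).1 hCount
    fun M hM hbal => (hBal M hM hbal).trans_eq (by rw [hε_def]; ring)⟩
end

section
/- Let d ≥ 1 and let H be a (d+1)-uniform hypergraph on an n-element vertex set V (n ≥ 2) with e edges. Then there exist two distinct vertices u, v ∈ V such that the number of d-element subsets τ of V \ {u, v} with both τ ∪ {u} ∈ H and τ ∪ {v} ∈ H is at least ( ((d+1)e)^2 / binom(n, d) − (d+1)e ) / (2 · binom(n, 2)). -/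
/-!
Double count triples `(τ, u, v)` where `τ` is a `d`-set and `u ≠ v` both lie in the link of `τ`,
i.e. extend `τ` to an edge. Summing over `τ`, a `d`-set whose link has `k` vertices contributes
`k² - k` ordered pairs, and the link sizes sum to `(d + 1) e`; by Cauchy–Schwarz over the
`choose n d` sets `τ` the total is at least `((d + 1) e)² / choose n d - (d + 1) e`. Summing over
the `2 · choose n 2` ordered pairs `(u, v)` instead, some pair receives at least the average.
-/

open Finset

namespace Finset

section Average

variable {ι R : Type*} [Field R] [LinearOrder R] [IsStrictOrderedRing R]

theorem exists_sum_div_card_le {s : Finset ι} (hs : s.Nonempty) (f : ι → R) :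
    ∃ i ∈ s, (∑ j ∈ s, f j) / #s ≤ f i :=
  exists_le_of_sum_le hs <| by
    rw [sum_const, nsmul_eq_mul, mul_div_cancel₀ _ (by positivity)]

end Average

variable {α : Type*}

theorem cast_card_offDiag {R : Type*} [Ring R] (s : Finset α) :
    (#s.offDiag : R) = #s ^ 2 - #s := by
  rw [offDiag_card, Nat.cast_sub (Nat.le_mul_self _), Nat.cast_mul, sq]

theorem cast_card_univ_offDiag {K : Type*} [Field K] [CharZero K] [Fintype α] :
    (#(univ : Finset α).offDiag : K) = 2 * (Fintype.card α).choose 2 := by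
  rw [cast_card_offDiag, Nat.cast_choose_two, card_univ]
  ring

variable [DecidableEq α]

theorem sum_card_offDiag_eq_sum_card_filter [Fintype α] {ι : Type*} (T : Finset ι)
    (S : ι → Finset α) :
    ∑ τ ∈ T, #(S τ).offDiag = ∑ p ∈ univ.offDiag, #{τ ∈ T | p.1 ∈ S τ ∧ p.2 ∈ S τ} := by
  have hS (τ : ι) : (S τ).offDiag =
      univ.offDiag.bipartiteAbove (fun τ (p : α × α) => p.1 ∈ S τ ∧ p.2 ∈ S τ) τ := by
    ext p
    simp only [mem_offDiag, mem_bipartiteAbove, mem_univ, true_and]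
    tauto
  simp_rw [hS]
  exact sum_card_bipartiteAbove_eq_sum_card_bipartiteBelow _

variable [Fintype α]

def link (H : Finset (Finset α)) (τ : Finset α) : Finset α := {w | w ∉ τ ∧ insert w τ ∈ H}

@[simp]
theorem mem_link {H : Finset (Finset α)} {τ : Finset α} {w : α} :
    w ∈ H.link τ ↔ w ∉ τ ∧ insert w τ ∈ H := by
  simp [link]

theorem sum_card_link {H : Finset (Finset α)} {d : ℕ} (hH : ∀ t ∈ H, #t = d + 1) :
    ∑ τ ∈ univ.powersetCard d, #(H.link τ) = (d + 1) * #H := by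
  calc ∑ τ ∈ univ.powersetCard d, #(H.link τ)
      = #((univ.powersetCard d).sigma H.link) := (card_sigma _ _).symm
    _ = #(H.sigma fun t => t) := by
      -- `(τ, w) ↦ (insert w τ, w)`, with inverse `(t, w) ↦ (t.erase w, w)`
      refine card_nbij' (fun a => ⟨insert a.2 a.1, a.2⟩) (fun b => ⟨b.1.erase b.2, b.2⟩)
        ?_ ?_ ?_ ?_
      · rintro ⟨τ, w⟩ h
        simp_all
      · rintro ⟨t, w⟩ h
        simp_all [card_erase_of_mem, insert_erase]
      · rintro ⟨τ, w⟩ h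
        simp_all
      · rintro ⟨t, w⟩ h
        simp_all [insert_erase]
    _ = ∑ t ∈ H, #t := card_sigma _ _
    _ = (d + 1) * #H := by rw [sum_congr rfl hH, sum_const, smul_eq_mul, mul_comm]

theorem filter_mem_link_and_mem_link (H : Finset (Finset α)) (d : ℕ) (u v : α) :
    {τ ∈ (univ : Finset α).powersetCard d | u ∈ H.link τ ∧ v ∈ H.link τ} =
      {τ ∈ (univ \ {u, v}).powersetCard d | insert u τ ∈ H ∧ insert v τ ∈ H} := by
  ext τ
  simp only [mem_filter, mem_powersetCard, mem_link, subset_univ, true_and, subset_sdiff,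
    disjoint_insert_right, disjoint_singleton_right]
  tauto

end Finset

theorem exists_pair_with_large_common_link_general (d : ℕ) {V : Type*} [Fintype V]
    [DecidableEq V] (H : Finset (Finset V)) (hH : ∀ t ∈ H, t.card = d + 1)
    (n e : ℕ) (hn : Fintype.card V = n) (hn2 : 2 ≤ n) (he : H.card = e) :
    ∃ u v : V, u ≠ v ∧
      ((((d : ℝ) + 1) * e) ^ 2 / (n.choose d) - ((d : ℝ) + 1) * e) / (2 * n.choose 2) ≤
        ((((Finset.univ \ {u, v}).powersetCard d).filter
            (fun τ => insert u τ ∈ H ∧ insert v τ ∈ H)).card : ℝ) := by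
  subst hn he
  set T := (univ : Finset V).powersetCard d
  have hpairs : (univ : Finset V).offDiag.Nonempty := by
    obtain ⟨u, v, huv⟩ := Fintype.exists_pair_of_one_lt_card hn2
    exact ⟨(u, v), by simpa using huv⟩
  obtain ⟨⟨u, v⟩, huv, hcommon⟩ := exists_sum_div_card_le hpairs
    fun p => (#{τ ∈ T | p.1 ∈ H.link τ ∧ p.2 ∈ H.link τ} : ℝ)
  refine ⟨u, v, (mem_offDiag.1 huv).2.2, ?_⟩
  rw [← filter_mem_link_and_mem_link]
  refine le_trans ?_ hcommon
  have hdeg : ∑ τ ∈ T, (#(H.link τ) : ℝ) = (d + 1) * #H := by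
    exact_mod_cast sum_card_link hH
  have hCS : (∑ τ ∈ T, (#(H.link τ) : ℝ)) ^ 2 / #T ≤ ∑ τ ∈ T, (#(H.link τ) : ℝ) ^ 2 := by
    simpa using pow_sum_div_card_le_sum_pow (fun τ _ => Nat.cast_nonneg (#(H.link τ))) 1
  rw [cast_card_univ_offDiag, ← Nat.cast_sum, ← sum_card_offDiag_eq_sum_card_filter,
    Nat.cast_sum]
  simp only [cast_card_offDiag, sum_sub_distrib]
  rw [hdeg, card_powersetCard, card_univ] at hCS
  rw [hdeg]
  gcongr

/-- In a `(d+1)`-uniform hypergraph `H` on an `n`-element vertex set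
(`n ≥ 2`) with `e` edges, there are two distinct vertices `u, v` such that the number of
`d`-element subsets `τ ⊆ V \ {u, v}` with both `τ ∪ {u} ∈ H` and `τ ∪ {v} ∈ H` is at
least `( ((d+1)e)² / choose n d − (d+1)e ) / (2 · choose n 2)`. -/
theorem exists_pair_with_large_common_link (d : ℕ) (hd : 1 ≤ d) {V : Type*} [Fintype V]
    [DecidableEq V] (H : Finset (Finset V)) (hH : ∀ t ∈ H, t.card = d + 1)
    (n e : ℕ) (hn : Fintype.card V = n) (hn2 : 2 ≤ n) (he : H.card = e) :
    ∃ u v : V, u ≠ v ∧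
      ((((d : ℝ) + 1) * e) ^ 2 / (n.choose d) - ((d : ℝ) + 1) * e) / (2 * n.choose 2) ≤
        ((((Finset.univ \ {u, v}).powersetCard d).filter
            (fun τ => insert u τ ∈ H ∧ insert v τ ∈ H)).card : ℝ) :=
  exists_pair_with_large_common_link_general d H hH n e hn hn2 he
end
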